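/- arXiv:2210.00533 — 3 statements merged into one kernel-verified Lean document; each statement's English description precedes it below -/
import Mathlib

section
/- Fix n ≥ 1 and strategies (σ,μ,τ), and let T be uniformly distributed on {1,…,n} and independent of (U^n,M_1,M_2,V^n) ~ P^{σμτ}. Define U = U_T, W_1 = (M_1,T), W_2 = (M_2,T), V = V_T. Then the induced joint distribution P^{σμτ}_{U W_1 W_2 V} has marginal on 𝒰 equal to P_U, and satisfies the two Markov chain properties U –∘– W_1 –∘– W_2 and W_1 –∘– W_2 –∘– V; that is, for all points where the conditionals are defined, P(w_2 | u, w_1) = P(w_2 | w_1) and P(v | w_1, w_2) = P(v | w_2). -/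
/-!
With `T` uniform and independent of the block, the single-letter law factorizes along the
cascade as `P(u, w₁) · P(w₂ | w₁) · P(v | w₂)`, where `P(w₂ | w₁) = [t₂ = t₁] μ(m₂ | m₁)`
and `P(v | w₂)` is the law of the `t₂`-th action under `τ(· | m₂)`. Any law of the form
`f(x, y) g(y, z)` satisfies `P(x, y, z) P(y) = P(x, y) P(y, z)`, which gives both Markov chains.
Summing out `w₂` and `v` leaves `P(u, w₁)`, and summing that over `m₁` gives the `t`-th
coordinate marginal of the i.i.d. source, which is `P_U` for every `t`.
-/

open Finset Filter

/-- A probability distribution on a finite alphabet. -/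
structure FDist (α : Type) [Fintype α] where
  p : α → ℝ
  nonneg : ∀ a, 0 ≤ p a
  sum_one : ∑ a, p a = 1

/-- The message alphabet `{1, …, 2^⌊nR⌋}`. -/
abbrev Msg (n : ℕ) (R : ℝ) : Type := Fin (2 ^ ⌊(n : ℝ) * R⌋₊)

section NLetter

variable {U V : Type} [Fintype U] [Fintype V]

/-- The joint law `P^{σμτ}(uⁿ, m₁, m₂, vⁿ)` induced by the source and the strategies. -/
noncomputable def jointN {n : ℕ} {R1 R2 : ℝ} (PU : FDist U)
    (σ : (Fin n → U) → FDist (Msg n R1))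
    (μ : Msg n R1 → FDist (Msg n R2))
    (τ : Msg n R2 → FDist (Fin n → V))
    (un : Fin n → U) (m1 : Msg n R1) (m2 : Msg n R2) (vn : Fin n → V) : ℝ :=
  (∏ t, PU.p (un t)) * (σ un).p m1 * (μ m1).p m2 * (τ m2).p vn

/-- The long-run cost `cⁿ(σ,μ,τ) = E[(1/n) ∑_t c(U_t, V_t)]`. -/
noncomputable def costN {n : ℕ} {R1 R2 : ℝ} (PU : FDist U)
    (σ : (Fin n → U) → FDist (Msg n R1))
    (μ : Msg n R1 → FDist (Msg n R2))
    (τ : Msg n R2 → FDist (Fin n → V))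
    (c : U → V → ℝ) : ℝ :=
  ∑ un : Fin n → U, ∑ m1 : Msg n R1, ∑ m2 : Msg n R2, ∑ vn : Fin n → V,
    jointN PU σ μ τ un m1 m2 vn * ((n : ℝ)⁻¹ * ∑ t, c (un t) (vn t))

/-- Best-response set `𝔸₃(σ,μ)` of the decoder. -/
noncomputable def A3 {n : ℕ} {R1 R2 : ℝ} (PU : FDist U) (c3 : U → V → ℝ)
    (σ : (Fin n → U) → FDist (Msg n R1))
    (μ : Msg n R1 → FDist (Msg n R2)) :
    Set (Msg n R2 → FDist (Fin n → V)) :=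
  {τ | ∀ τ', costN PU σ μ τ c3 ≤ costN PU σ μ τ' c3}

/-- Best-response set `𝔸₂(σ)` of the relay (pairs `(μ,τ)` with `τ ∈ 𝔸₃(σ,μ)`
minimizing the relay cost). -/
noncomputable def A2 {n : ℕ} {R1 R2 : ℝ} (PU : FDist U) (c2 c3 : U → V → ℝ)
    (σ : (Fin n → U) → FDist (Msg n R1)) :
    Set ((Msg n R1 → FDist (Msg n R2)) × (Msg n R2 → FDist (Fin n → V))) :=
  {mt | mt.2 ∈ A3 PU c3 σ mt.1 ∧
    ∀ mt' : (Msg n R1 → FDist (Msg n R2)) × (Msg n R2 → FDist (Fin n → V)),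
      mt'.2 ∈ A3 PU c3 σ mt'.1 →
        costN PU σ mt.1 mt.2 c2 ≤ costN PU σ mt'.1 mt'.2 c2}

/-- The encoder's n-letter optimal cost
`Γₑⁿ(R₁,R₂) = inf_σ max_{(μ,τ) ∈ 𝔸₂(σ)} c₁ⁿ(σ,μ,τ)`. -/
noncomputable def GammaN (PU : FDist U) (c1 c2 c3 : U → V → ℝ)
    (n : ℕ) (R1 R2 : ℝ) : ℝ :=
  sInf {x | ∃ σ : (Fin n → U) → FDist (Msg n R1),
    x = sSup ((fun mt => costN PU σ mt.1 mt.2 c1) '' A2 (R2 := R2) PU c2 c3 σ)}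

end NLetter


section SingleLetterization

variable {U V : Type} [Fintype U] [DecidableEq U] [Fintype V] [DecidableEq V]
variable {n : ℕ} {R1 R2 : ℝ}

/-- The induced single-letter joint law `P^{σμτ}_{U W₁ W₂ V}` of
`U = U_T`, `W₁ = (M₁,T)`, `W₂ = (M₂,T)`, `V = V_T`, where `T` is uniform on
`{1,…,n}` and independent of `(Uⁿ,M₁,M₂,Vⁿ) ∼ P^{σμτ}`. -/
noncomputable def jointSL (PU : FDist U)
    (σ : (Fin n → U) → FDist (Msg n R1))
    (μ : Msg n R1 → FDist (Msg n R2))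
    (τ : Msg n R2 → FDist (Fin n → V))
    (u : U) (w1 : Msg n R1 × Fin n) (w2 : Msg n R2 × Fin n) (v : V) : ℝ :=
  ∑ un : Fin n → U, ∑ vn : Fin n → V,
    if w2.2 = w1.2 ∧ un w1.2 = u ∧ vn w1.2 = v
    then (n : ℝ)⁻¹ * jointN PU σ μ τ un w1.1 w2.1 vn else 0

variable (PU : FDist U)
    (σ : (Fin n → U) → FDist (Msg n R1))
    (μ : Msg n R1 → FDist (Msg n R2))
    (τ : Msg n R2 → FDist (Fin n → V))

/-- Marginal of `P^{σμτ}_{U W₁ W₂ V}` on `U`. -/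
noncomputable def margU (u : U) : ℝ :=
  ∑ w1, ∑ w2, ∑ v, jointSL PU σ μ τ u w1 w2 v

/-- Marginal of `P^{σμτ}_{U W₁ W₂ V}` on `W₁`. -/
noncomputable def margW1 (w1 : Msg n R1 × Fin n) : ℝ :=
  ∑ u, ∑ w2, ∑ v, jointSL PU σ μ τ u w1 w2 v

/-- Marginal of `P^{σμτ}_{U W₁ W₂ V}` on `W₂`. -/
noncomputable def margW2 (w2 : Msg n R2 × Fin n) : ℝ :=
  ∑ u, ∑ w1, ∑ v, jointSL PU σ μ τ u w1 w2 v

/-- Marginal of `P^{σμτ}_{U W₁ W₂ V}` on `(U,W₁)`. -/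
noncomputable def margUW1 (u : U) (w1 : Msg n R1 × Fin n) : ℝ :=
  ∑ w2, ∑ v, jointSL PU σ μ τ u w1 w2 v

/-- Marginal of `P^{σμτ}_{U W₁ W₂ V}` on `(W₁,W₂)`. -/
noncomputable def margW1W2 (w1 : Msg n R1 × Fin n) (w2 : Msg n R2 × Fin n) : ℝ :=
  ∑ u, ∑ v, jointSL PU σ μ τ u w1 w2 v

/-- Marginal of `P^{σμτ}_{U W₁ W₂ V}` on `(W₂,V)`. -/
noncomputable def margW2V (w2 : Msg n R2 × Fin n) (v : V) : ℝ :=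
  ∑ u, ∑ w1, jointSL PU σ μ τ u w1 w2 v

/-- Marginal of `P^{σμτ}_{U W₁ W₂ V}` on `(U,W₁,W₂)`. -/
noncomputable def margUW1W2 (u : U) (w1 : Msg n R1 × Fin n)
    (w2 : Msg n R2 × Fin n) : ℝ :=
  ∑ v, jointSL PU σ μ τ u w1 w2 v

/-- Marginal of `P^{σμτ}_{U W₁ W₂ V}` on `(W₁,W₂,V)`. -/
noncomputable def margW1W2V (w1 : Msg n R1 × Fin n) (w2 : Msg n R2 × Fin n)
    (v : V) : ℝ :=
  ∑ u, jointSL PU σ μ τ u w1 w2 v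

end SingleLetterization

section MarkovChain

variable {α β γ δ R : Type*}

/-- `X –∘– Y –∘– Z` for a joint law `q`, possibly unnormalized. -/
def IsMarkovChain [Fintype α] [Fintype γ] [CommSemiring R] (q : α → β → γ → R) : Prop :=
  ∀ x y z, q x y z * ∑ x', ∑ z', q x' y z' = (∑ z', q x y z') * ∑ x', q x' y z

theorem isMarkovChain_of_eq_mul [Fintype α] [Fintype γ] [CommSemiring R]
    {q : α → β → γ → R} (f : α → β → R) (g : β → γ → R)
    (hq : ∀ x y z, q x y z = f x y * g y z) : IsMarkovChain q := by
  intro x y z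
  simp only [hq, ← mul_sum, ← sum_mul]
  ring

theorem IsMarkovChain.div_eq_div [Fintype α] [Fintype γ] [Field R] {q : α → β → γ → R}
    (h : IsMarkovChain q) {x : α} {y : β} (z : γ) (hxy : ∑ z', q x y z' ≠ 0)
    (hy : ∑ x', ∑ z', q x' y z' ≠ 0) :
    q x y z / ∑ z', q x y z' = (∑ x', q x' y z) / ∑ x', ∑ z', q x' y z' :=
  (div_eq_div_iff hxy hy).2 ((h x y z).trans (mul_comm _ _))

theorem isMarkovChain_sum_fourth [Fintype α] [Fintype γ] [Fintype δ] [CommSemiring R]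
    {p : α → β → γ → δ → R} (f : α → β → R) (g : β → γ → δ → R)
    (hp : ∀ a b c d, p a b c d = f a b * g b c d) :
    IsMarkovChain fun a b c => ∑ d, p a b c d :=
  isMarkovChain_of_eq_mul f (fun b c => ∑ d, g b c d) fun a b c => by simp only [hp, mul_sum]

theorem isMarkovChain_sum_first [Fintype α] [Fintype β] [Fintype δ] [CommSemiring R]
    {p : α → β → γ → δ → R} (f : α → β → γ → R) (g : γ → δ → R)
    (hp : ∀ a b c d, p a b c d = f a b c * g c d) :
    IsMarkovChain fun b c d => ∑ a, p a b c d :=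
  isMarkovChain_of_eq_mul (fun b c => ∑ a, f a b c) g fun b c d => by simp only [hp, sum_mul]

end MarkovChain

theorem sum_ite_apply_eq_prod_apply {ι α R : Type*} [Fintype ι] [DecidableEq ι]
    [Fintype α] [DecidableEq α] [CommSemiring R] {p : α → R} (hp : ∑ a, p a = 1)
    (t : ι) (a : α) : ∑ x : ι → α, (if x t = a then ∏ i, p (x i) else 0) = p a := by
  -- the indicator of `x t = a` goes into the `t`-th factor, turning the sum of products into
  -- a product of sums
  let q : ι → α → R := fun i b => if i = t → b = a then p b else 0
  calc ∑ x : ι → α, (if x t = a then ∏ i, p (x i) else 0)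
      = ∑ x : ι → α, ∏ i, q i (x i) := by simp only [q, Fintype.prod_ite_zero, forall_eq]
    _ = ∏ i, ∑ b, q i b := (Fintype.prod_sum q).symm
    _ = ∏ i, if i = t then p a else 1 :=
        prod_congr rfl fun i _ => by by_cases hi : i = t <;> simp [q, hi, hp]
    _ = p a := Fintype.prod_ite_eq' t _

section SingleLetterFactorization

variable {U V : Type} [Fintype U] [DecidableEq U] [Fintype V] [DecidableEq V]
variable {n : ℕ} {R1 R2 : ℝ}

noncomputable def lawUW1 (PU : FDist U) (σ : (Fin n → U) → FDist (Msg n R1))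
    (u : U) (w1 : Msg n R1 × Fin n) : ℝ :=
  (n : ℝ)⁻¹ *
    ∑ un : Fin n → U, if un w1.2 = u then (∏ s, PU.p (un s)) * (σ un).p w1.1 else 0

noncomputable def kernelW1W2 (μ : Msg n R1 → FDist (Msg n R2))
    (w1 : Msg n R1 × Fin n) (w2 : Msg n R2 × Fin n) : ℝ :=
  if w2.2 = w1.2 then (μ w1.1).p w2.1 else 0

noncomputable def kernelW2V (τ : Msg n R2 → FDist (Fin n → V))
    (w2 : Msg n R2 × Fin n) (v : V) : ℝ :=
  ∑ vn : Fin n → V, if vn w2.2 = v then (τ w2.1).p vn else 0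

theorem sum_lawUW1 (hn : n ≠ 0) (PU : FDist U) (σ : (Fin n → U) → FDist (Msg n R1)) (u : U) :
    ∑ w1, lawUW1 PU σ u w1 = PU.p u := by
  have hcoord : ∀ t : Fin n, ∑ m1, ∑ un : Fin n → U,
      (if un t = u then (∏ s, PU.p (un s)) * (σ un).p m1 else 0) = PU.p u := by
    intro t
    rw [sum_comm, ← sum_ite_apply_eq_prod_apply PU.sum_one t u]
    refine sum_congr rfl fun un _ => ?_
    split_ifs <;> simp only [← mul_sum, (σ un).sum_one, mul_one, sum_const_zero]
  simp only [lawUW1, ← mul_sum, Fintype.sum_prod_type]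
  rw [sum_comm, sum_congr rfl fun t _ => hcoord t, sum_const, card_univ, Fintype.card_fin,
    nsmul_eq_mul, ← mul_assoc, inv_mul_cancel₀ (Nat.cast_ne_zero.2 hn), one_mul]

theorem sum_kernelW1W2 (μ : Msg n R1 → FDist (Msg n R2)) (w1 : Msg n R1 × Fin n) :
    ∑ w2, kernelW1W2 μ w1 w2 = 1 := by
  simp only [kernelW1W2, Fintype.sum_prod_type, sum_ite_eq', mem_univ, if_true]
  exact (μ w1.1).sum_one

theorem sum_kernelW2V (τ : Msg n R2 → FDist (Fin n → V)) (w2 : Msg n R2 × Fin n) :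
    ∑ v, kernelW2V τ w2 v = 1 := by
  simp only [kernelW2V]
  rw [sum_comm]
  simpa only [sum_ite_eq, mem_univ, if_true] using (τ w2.1).sum_one

variable (PU : FDist U) (σ : (Fin n → U) → FDist (Msg n R1))
  (μ : Msg n R1 → FDist (Msg n R2)) (τ : Msg n R2 → FDist (Fin n → V))

theorem jointSL_eq_mul (u : U) (w1 : Msg n R1 × Fin n) (w2 : Msg n R2 × Fin n) (v : V) :
    jointSL PU σ μ τ u w1 w2 v =
      lawUW1 PU σ u w1 * kernelW1W2 μ w1 w2 * kernelW2V τ w2 v := by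
  by_cases ht : w2.2 = w1.2
  · simp only [jointSL, jointN, lawUW1, kernelW1W2, kernelW2V, ht, true_and, if_true,
      ite_and, mul_sum, sum_mul]
    rw [sum_comm]
    refine sum_congr rfl fun un _ => sum_congr rfl fun vn _ => ?_
    split_ifs <;> ring
  · simp [jointSL, kernelW1W2, ht]

theorem margU_eq (hn : n ≠ 0) (u : U) : margU PU σ μ τ u = PU.p u := by
  simp only [margU, jointSL_eq_mul, mul_assoc, ← mul_sum, sum_kernelW2V, mul_one,
    sum_kernelW1W2]
  exact sum_lawUW1 hn PU σ u

theorem margW1W2_eq_sum (w1 : Msg n R1 × Fin n) (w2 : Msg n R2 × Fin n) :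
    margW1W2 PU σ μ τ w1 w2 = ∑ v, margW1W2V PU σ μ τ w1 w2 v :=
  sum_comm

theorem margW2V_eq_sum (w2 : Msg n R2 × Fin n) (v : V) :
    margW2V PU σ μ τ w2 v = ∑ w1, margW1W2V PU σ μ τ w1 w2 v :=
  sum_comm

theorem margW2_eq_sum (w2 : Msg n R2 × Fin n) :
    margW2 PU σ μ τ w2 = ∑ w1, ∑ v, margW1W2V PU σ μ τ w1 w2 v := by
  rw [margW2, sum_comm]
  exact sum_congr rfl fun _ _ => sum_comm

end SingleLetterFactorization

theorem cascade_singleletter_markov_general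
    {U V : Type} [Fintype U] [DecidableEq U]
    [Fintype V] [DecidableEq V]
    {n : ℕ} (hn : 1 ≤ n) {R1 R2 : ℝ} (PU : FDist U)
    (σ : (Fin n → U) → FDist (Msg n R1))
    (μ : Msg n R1 → FDist (Msg n R2))
    (τ : Msg n R2 → FDist (Fin n → V)) :
    (∀ u, margU PU σ μ τ u = PU.p u) ∧
    (∀ (u : U) (w1 : Msg n R1 × Fin n) (w2 : Msg n R2 × Fin n),
      margUW1 PU σ μ τ u w1 ≠ 0 → margW1 PU σ μ τ w1 ≠ 0 →
        margUW1W2 PU σ μ τ u w1 w2 / margUW1 PU σ μ τ u w1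
          = margW1W2 PU σ μ τ w1 w2 / margW1 PU σ μ τ w1) ∧
    (∀ (w1 : Msg n R1 × Fin n) (w2 : Msg n R2 × Fin n) (v : V),
      margW1W2 PU σ μ τ w1 w2 ≠ 0 → margW2 PU σ μ τ w2 ≠ 0 →
        margW1W2V PU σ μ τ w1 w2 v / margW1W2 PU σ μ τ w1 w2
          = margW2V PU σ μ τ w2 v / margW2 PU σ μ τ w2) := by
  have hfactor := jointSL_eq_mul PU σ μ τ
  have hUW1W2 := isMarkovChain_sum_fourth (lawUW1 PU σ)
    (fun w1 w2 v => kernelW1W2 μ w1 w2 * kernelW2V τ w2 v)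
    fun u w1 w2 v => (hfactor u w1 w2 v).trans (mul_assoc _ _ _)
  have hW1W2V := isMarkovChain_sum_first _ (kernelW2V τ) hfactor
  refine ⟨margU_eq PU σ μ τ (Nat.one_le_iff_ne_zero.mp hn), ?_, ?_⟩
  · intro u w1 w2 hUW1 hW1
    exact hUW1W2.div_eq_div w2 hUW1 hW1
  · intro w1 w2 v hW1W2 hW2
    rw [margW1W2_eq_sum] at hW1W2 ⊢
    rw [margW2_eq_sum] at hW2 ⊢
    rw [margW2V_eq_sum]
    exact hW1W2V.div_eq_div v hW1W2 hW2

/-- **Lemma 1 (decomposition).** For `n ≥ 1` and strategies `(σ,μ,τ)`, with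
`U = U_T`, `W₁ = (M₁,T)`, `W₂ = (M₂,T)`, `V = V_T` (`T` uniform on `{1,…,n}`
and independent of `(Uⁿ,M₁,M₂,Vⁿ)`), the induced distribution
`P^{σμτ}_{U W₁ W₂ V}` has marginal `P_U` on `𝒰` and satisfies the Markov chains
`U –∘– W₁ –∘– W₂` and `W₁ –∘– W₂ –∘– V`: wherever the conditionals are defined,
`P(w₂ | u, w₁) = P(w₂ | w₁)` and `P(v | w₁, w₂) = P(v | w₂)`. -/
theorem cascade_singleletter_markov
    {U V : Type} [Fintype U] [DecidableEq U] [Nonempty U]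
    [Fintype V] [DecidableEq V] [Nonempty V]
    {n : ℕ} (hn : 1 ≤ n) {R1 R2 : ℝ} (PU : FDist U)
    (σ : (Fin n → U) → FDist (Msg n R1))
    (μ : Msg n R1 → FDist (Msg n R2))
    (τ : Msg n R2 → FDist (Fin n → V)) :
    (∀ u, margU PU σ μ τ u = PU.p u) ∧
    (∀ (u : U) (w1 : Msg n R1 × Fin n) (w2 : Msg n R2 × Fin n),
      margUW1 PU σ μ τ u w1 ≠ 0 → margW1 PU σ μ τ w1 ≠ 0 →
        margUW1W2 PU σ μ τ u w1 w2 / margUW1 PU σ μ τ u w1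
          = margW1W2 PU σ μ τ w1 w2 / margW1 PU σ μ τ w1) ∧
    (∀ (w1 : Msg n R1 × Fin n) (w2 : Msg n R2 × Fin n) (v : V),
      margW1W2 PU σ μ τ w1 w2 ≠ 0 → margW2 PU σ μ τ w2 ≠ 0 →
        margW1W2V PU σ μ τ w1 w2 v / margW1W2 PU σ μ τ w1 w2
          = margW2V PU σ μ τ w2 v / margW2 PU σ μ τ w2) :=
  cascade_singleletter_markov_general hn PU σ μ τ
end

section
/- Fix n ≥ 1 and strategies (σ,μ) of the encoder and relay, let T be uniformly distributed on {1,…,n} and independent of (U^n,M_1,M_2) under the law induced by P_U, σ, μ. Suppose the family of conditional distributions Q : {1,…,2^⌊nR_2⌋} × {1,…,n} → Δ(𝒱) minimizes the expected decoder cost E[c_3(U_T,V)], where V is drawn according to Q(·|M_2,T), over all such families of conditional distributions. Then the product decoder strategy τ* defined by τ*(v^n|m_2) = ∏_{t=1}^n Q(v_t|m_2,t) is a best response: c_3^n(σ,μ,τ*) ≤ c_3^n(σ,μ,τ) for every decoder strategy τ, i.e., τ* ∈ A_3(σ,μ). -/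
/-!
Strategic communication via a cascade multiple-description network
(Bou Rouphael & Le Treust).

STATEMENT 9: the product decoder strategy built from an optimal single-letter
family of conditional distributions is a best response.
-/

open Finset Filter

/-- The product decoder strategy built from a family of per-letter
distributions: `τ*(vⁿ|m₂) = ∏_t Q(v_t | m₂, t)`. -/
noncomputable def prodFDist {n : ℕ} {V : Type} [Fintype V]
    (d : Fin n → FDist V) : FDist (Fin n → V) where
  p := fun f => ∏ t, (d t).p (f t)
  nonneg := fun f => Finset.prod_nonneg (fun t _ => (d t).nonneg (f t))
  sum_one := by
    have h := Finset.prod_univ_sum (fun _ : Fin n => (Finset.univ : Finset V))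
      (fun t v => (d t).p v)
    rw [Fintype.piFinset_univ] at h
    rw [← h]
    simp [FDist.sum_one]

section SLDecoder

variable {U V : Type} [Fintype U] [Fintype V]
variable {n : ℕ} {R1 R2 : ℝ}

/-- The law `P^{σμ}(uⁿ, m₁, m₂)` induced by the source, the encoder and the
relay (no decoder). -/
noncomputable def jointNoDec (PU : FDist U)
    (σ : (Fin n → U) → FDist (Msg n R1))
    (μ : Msg n R1 → FDist (Msg n R2))
    (un : Fin n → U) (m1 : Msg n R1) (m2 : Msg n R2) : ℝ :=
  (∏ t, PU.p (un t)) * (σ un).p m1 * (μ m1).p m2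

/-- The expected single-letter decoder cost `E[c₃(U_T, V)]`, where `T` is
uniform on `{1,…,n}`, independent of `(Uⁿ,M₁,M₂)`, and `V ∼ Q(·|M₂,T)`. -/
noncomputable def costSLDec (PU : FDist U)
    (σ : (Fin n → U) → FDist (Msg n R1))
    (μ : Msg n R1 → FDist (Msg n R2))
    (Q : Msg n R2 × Fin n → FDist V) (c3 : U → V → ℝ) : ℝ :=
  ∑ un : Fin n → U, ∑ m1 : Msg n R1, ∑ m2 : Msg n R2,
    jointNoDec PU σ μ un m1 m2
      * ((n : ℝ)⁻¹ * ∑ t, ∑ v, (Q (m2, t)).p v * c3 (un t) v)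

end SLDecoder

section Aux

variable {U V : Type} [Fintype U] [Fintype V]
variable {n : ℕ} {R1 R2 : ℝ}

open Classical in
/-- The marginal at coordinate `t` of a distribution on `Fin n → V`. -/
noncomputable def margFDist (d : FDist (Fin n → V)) (t : Fin n) : FDist V where
  p := fun v => ∑ vn : Fin n → V, if vn t = v then d.p vn else 0
  nonneg := fun v => Finset.sum_nonneg fun vn _ => by
    split_ifs
    · exact d.nonneg vn
    · exact le_rfl
  sum_one := by
    rw [Finset.sum_comm]
    simp [d.sum_one]

open Classical in
lemma sum_margFDist (d : FDist (Fin n → V)) (t : Fin n) (f : V → ℝ) :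
    ∑ v, (margFDist d t).p v * f v = ∑ vn, d.p vn * f (vn t) := by
  unfold margFDist
  simp only [Finset.sum_mul, ite_mul, zero_mul]
  rw [Finset.sum_comm]
  refine Finset.sum_congr rfl fun vn _ => ?_
  simp

lemma sum_prodFDist (d : Fin n → FDist V) (t : Fin n) (f : V → ℝ) :
    ∑ vn : Fin n → V, (prodFDist d).p vn * f (vn t) = ∑ v, (d t).p v * f v := by
  have key : ∀ vn : Fin n → V,
      (prodFDist d).p vn * f (vn t)
        = ∏ s, ((d s).p (vn s) * if s = t then f (vn s) else 1) := by
    intro vn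
    rw [Finset.prod_mul_distrib, Finset.prod_ite_eq' Finset.univ t
      (fun s => f (vn s))]
    simp [prodFDist]
  simp only [key]
  have h := Finset.prod_univ_sum (fun _ : Fin n => (Finset.univ : Finset V))
    (fun s v => (d s).p v * if s = t then f v else 1)
  rw [Fintype.piFinset_univ] at h
  rw [← h]
  rw [Finset.prod_eq_single t]
  · simp
  · intro s _ hs
    simp [hs, (d s).sum_one]
  · simp

lemma costN_eq_costSLDec (PU : FDist U) (c3 : U → V → ℝ)
    (σ : (Fin n → U) → FDist (Msg n R1))
    (μ : Msg n R1 → FDist (Msg n R2))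
    (τ : Msg n R2 → FDist (Fin n → V))
    (Q : Msg n R2 × Fin n → FDist V)
    (h : ∀ (m2 : Msg n R2) (t : Fin n) (u : U),
      ∑ vn : Fin n → V, (τ m2).p vn * c3 u (vn t)
        = ∑ v, (Q (m2, t)).p v * c3 u v) :
    costN PU σ μ τ c3 = costSLDec PU σ μ Q c3 := by
  unfold costN costSLDec jointN jointNoDec
  refine Finset.sum_congr rfl fun un _ => Finset.sum_congr rfl fun m1 _ =>
    Finset.sum_congr rfl fun m2 _ => ?_
  have key : ∑ t, ∑ v, (Q (m2, t)).p v * c3 (un t) v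
      = ∑ vn : Fin n → V, (τ m2).p vn * ∑ t, c3 (un t) (vn t) := by
    simp only [← h]
    rw [Finset.sum_comm]
    simp [Finset.mul_sum]
  rw [key]
  simp only [Finset.mul_sum]
  exact Finset.sum_congr rfl fun vn _ => Finset.sum_congr rfl fun t _ => by ring

end Aux

/-- **Optimality of the product decoder strategy.** Fix `n ≥ 1` and strategies
`(σ,μ)`, and let `T` be uniform on `{1,…,n}`, independent of `(Uⁿ,M₁,M₂)`.
If the family of conditional distributions `Q : {1,…,2^⌊nR₂⌋} × {1,…,n} → Δ(𝒱)`
minimizes the expected decoder cost `E[c₃(U_T,V)]` (with `V ∼ Q(·|M₂,T)`) over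
all such families, then the product strategy `τ*(vⁿ|m₂) = ∏_t Q(v_t|m₂,t)` is a
best response: `c₃ⁿ(σ,μ,τ*) ≤ c₃ⁿ(σ,μ,τ)` for every decoder strategy `τ`,
i.e. `τ* ∈ 𝔸₃(σ,μ)`. -/
theorem cascade_product_decoder_best_response
    {U V : Type} [Fintype U] [Nonempty U] [Fintype V] [Nonempty V]
    {n : ℕ} (hn : 1 ≤ n) {R1 R2 : ℝ} (PU : FDist U) (c3 : U → V → ℝ)
    (σ : (Fin n → U) → FDist (Msg n R1))
    (μ : Msg n R1 → FDist (Msg n R2))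
    (Q : Msg n R2 × Fin n → FDist V)
    (hQ : ∀ Q' : Msg n R2 × Fin n → FDist V,
      costSLDec PU σ μ Q c3 ≤ costSLDec PU σ μ Q' c3) :
    (fun m2 => prodFDist (fun t => Q (m2, t))) ∈ A3 PU c3 σ μ := by
  intro τ
  have e1 : costN PU σ μ (fun m2 => prodFDist (fun t => Q (m2, t))) c3
      = costSLDec PU σ μ Q c3 :=
    costN_eq_costSLDec PU c3 σ μ _ Q fun m2 t u =>
      sum_prodFDist (fun t => Q (m2, t)) t (c3 u)
  have e2 : costN PU σ μ τ c3
      = costSLDec PU σ μ (fun p => margFDist (τ p.1) p.2) c3 :=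
    costN_eq_costSLDec PU c3 σ μ τ _ fun m2 t u =>
      (sum_margFDist (τ m2) t (c3 u)).symm
  rw [e1, e2]
  exact hQ _
end

section
/- Fix n ≥ 1 and strategies (σ,μ) of the encoder and relay, and let T be uniformly distributed on {1,…,n} and independent of (U^n,M_1,M_2) under the law induced by P_U, σ, μ. Then the minimal n-letter decoder cost equals the minimal single-letter cost: min over decoder strategies τ of c_3^n(σ,μ,τ) equals the minimum over families of conditional distributions Q : {1,…,2^⌊nR_2⌋} × {1,…,n} → Δ(𝒱) of E[c_3(U_T,V)], where V is drawn according to Q(·|M_2,T). -/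
/-!
Strategic communication via a cascade multiple-description network
(Bou Rouphael & Le Treust).

STATEMENT 10: the minimal n-letter decoder cost equals the minimal
single-letter decoder cost.
-/

open Finset Filter

/-! The n-letter decoder cost depends on a decoder strategy `τ` only through the per-letter
marginals of the `τ(·|m₂)`, and it is exactly the single-letter cost of the family of these
marginals. Conversely, every family `Q` of per-letter laws is the family of marginals of the
product decoder `τ(vⁿ|m₂) = ∏ₜ Q(vₜ|m₂,t)`. Hence both costs range over the same set of values. -/

namespace FDist

variable {α β : Type} [Fintype α] [Fintype β]

open Classical in
noncomputable def map (f : α → β) (d : FDist α) : FDist β where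
  p b := ∑ a, if f a = b then d.p a else 0
  nonneg b := Finset.sum_nonneg fun a _ => by split_ifs <;> simp [d.nonneg]
  sum_one := by
    rw [Finset.sum_comm]
    simp [d.sum_one]

theorem sum_map_mul (f : α → β) (d : FDist α) (g : β → ℝ) :
    ∑ b, (d.map f).p b * g b = ∑ a, d.p a * g (f a) := by
  classical
  simp only [map, Finset.sum_mul, ite_mul, zero_mul]
  rw [Finset.sum_comm]
  simp

end FDist

theorem prodFDist_sum_mul_apply {n : ℕ} {V : Type} [Fintype V] (d : Fin n → FDist V)
    (t : Fin n) (g : V → ℝ) :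
    ∑ f : Fin n → V, (prodFDist d).p f * g (f t) = ∑ v, (d t).p v * g v := by
  -- Absorb `g` into the `t`-th factor; the other factors then sum to `1`.
  have hfactor : ∀ f : Fin n → V, (prodFDist d).p f * g (f t)
      = ∏ s, (d s).p (f s) * (if s = t then g (f s) else 1) := fun f => by
    rw [Finset.prod_mul_distrib, Finset.prod_ite_eq' Finset.univ t]
    simp [prodFDist]
  simp only [hfactor]
  rw [← Fintype.prod_sum fun s v => (d s).p v * (if s = t then g v else 1),
    Finset.prod_eq_single t]
  · simp
  · intro s _ hs
    simp [hs, (d s).sum_one]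
  · simp

section SingleLetter

variable {U V : Type} [Fintype U] [Fintype V] {n : ℕ} {R1 R2 : ℝ}

theorem costN_eq_sum_jointNoDec (PU : FDist U) (σ : (Fin n → U) → FDist (Msg n R1))
    (μ : Msg n R1 → FDist (Msg n R2)) (τ : Msg n R2 → FDist (Fin n → V))
    (c : U → V → ℝ) :
    costN PU σ μ τ c = ∑ un : Fin n → U, ∑ m1 : Msg n R1, ∑ m2 : Msg n R2,
      jointNoDec PU σ μ un m1 m2
        * ((n : ℝ)⁻¹ * ∑ t, ∑ vn, (τ m2).p vn * c (un t) (vn t)) := by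
  refine Finset.sum_congr rfl fun un _ => Finset.sum_congr rfl fun m1 _ =>
    Finset.sum_congr rfl fun m2 _ => ?_
  simp only [jointN, jointNoDec, Finset.mul_sum]
  rw [Finset.sum_comm]
  refine Finset.sum_congr rfl fun t _ => Finset.sum_congr rfl fun vn _ => ?_
  ring

theorem costN_eq_costSLDec_of_marginal (PU : FDist U)
    (σ : (Fin n → U) → FDist (Msg n R1)) (μ : Msg n R1 → FDist (Msg n R2))
    (τ : Msg n R2 → FDist (Fin n → V)) (Q : Msg n R2 × Fin n → FDist V) (c : U → V → ℝ)
    (hQ : ∀ m2 t (g : V → ℝ),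
      ∑ vn, (τ m2).p vn * g (vn t) = ∑ v, (Q (m2, t)).p v * g v) :
    costN PU σ μ τ c = costSLDec PU σ μ Q c := by
  simp only [costN_eq_sum_jointNoDec, costSLDec, hQ]

end SingleLetter

theorem cascade_min_decoder_cost_singleletter_general
    {U V : Type} [Fintype U] [Fintype V]
    {n : ℕ} {R1 R2 : ℝ} (PU : FDist U) (c3 : U → V → ℝ)
    (σ : (Fin n → U) → FDist (Msg n R1))
    (μ : Msg n R1 → FDist (Msg n R2)) :
    (⨅ τ : Msg n R2 → FDist (Fin n → V), costN PU σ μ τ c3)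
      = ⨅ Q : Msg n R2 × Fin n → FDist V, costSLDec PU σ μ Q c3 := by
  suffices hrange : Set.range (fun τ => costN PU σ μ τ c3)
      = Set.range (fun Q => costSLDec PU σ μ Q c3) by
    rw [iInf, iInf, hrange]
  apply Set.Subset.antisymm
  · rintro _ ⟨τ, rfl⟩
    exact ⟨fun p => (τ p.1).map fun vn => vn p.2, (costN_eq_costSLDec_of_marginal PU σ μ τ _ c3
      fun m2 t g => (FDist.sum_map_mul _ _ g).symm).symm⟩
  · rintro _ ⟨Q, rfl⟩
    exact ⟨fun m2 => prodFDist fun t => Q (m2, t), costN_eq_costSLDec_of_marginal PU σ μ _ Q c3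
      fun m2 t g => prodFDist_sum_mul_apply _ t g⟩

/-- **Single-letterization of the optimal decoder cost.** Fix `n ≥ 1` and
strategies `(σ,μ)`, and let `T` be uniform on `{1,…,n}`, independent of
`(Uⁿ,M₁,M₂)`. The minimal n-letter decoder cost equals the minimal
single-letter cost:
`min_τ c₃ⁿ(σ,μ,τ) = min_Q E[c₃(U_T,V)]` where `V ∼ Q(·|M₂,T)` and `Q` ranges
over families of conditional distributions `{1,…,2^⌊nR₂⌋} × {1,…,n} → Δ(𝒱)`. -/
theorem cascade_min_decoder_cost_singleletter
    {U V : Type} [Fintype U] [Nonempty U] [Fintype V] [Nonempty V]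
    {n : ℕ} (hn : 1 ≤ n) {R1 R2 : ℝ} (PU : FDist U) (c3 : U → V → ℝ)
    (σ : (Fin n → U) → FDist (Msg n R1))
    (μ : Msg n R1 → FDist (Msg n R2)) :
    (⨅ τ : Msg n R2 → FDist (Fin n → V), costN PU σ μ τ c3)
      = ⨅ Q : Msg n R2 × Fin n → FDist V, costSLDec PU σ μ Q c3 :=
  cascade_min_decoder_cost_singleletter_general PU c3 σ μ
end
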